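/- arXiv:1801.00104 — 3 statements merged into one kernel-verified Lean document; each statement's English description precedes it below -/
import Mathlib

section
/- Let (H, d) be a complete metric space and let S(t), t ≥ 0, be a semiflow on H, i.e. S(0) = I (the identity on H), S(t)S(s) = S(t+s) for all s, t ≥ 0, and each map S(t) : H → H is continuous. Assume: (i) S has a bounded absorbing set, i.e. there is a bounded set B ⊆ H such that for every bounded set B₀ ⊆ H there exists t₁ ≥ 0 with S(t)B₀ ⊆ B for all t ≥ t₁; (ii) S is asymptotically compact, i.e. whenever (uₙ) is a bounded sequence in H and tₙ → ∞, the sequence (S(tₙ)uₙ) has a subsequence converging in H. Then S possesses a global attractor: there exists a nonempty compact set A ⊆ H which is invariant (S(t)A = A for all t ≥ 0) and attracts every bounded set, i.e. for every bounded B₀ ⊆ H and every ε > 0 there exists T ≥ 0 such that for all t ≥ T and all u ∈ B₀ one has inf_{a ∈ A} d(S(t)u, a) ≤ ε. -/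
open Filter Topology

/-- Existence of a global attractor for a semiflow on a complete metric space
with a bounded absorbing set which is asymptotically compact. -/
theorem global_attractor_existence
    {H : Type*} [MetricSpace H] [CompleteSpace H] [Nonempty H]
    (S : ℝ → H → H)
    (hS0 : ∀ u : H, S 0 u = u)
    (hSadd : ∀ s t : ℝ, 0 ≤ s → 0 ≤ t → ∀ u : H, S t (S s u) = S (t + s) u)
    (hScont : ∀ t : ℝ, 0 ≤ t → Continuous (S t))
    -- (i) bounded absorbing set
    (habs : ∃ B : Set H, Bornology.IsBounded B ∧
      ∀ B₀ : Set H, Bornology.IsBounded B₀ →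
        ∃ t₁ : ℝ, 0 ≤ t₁ ∧ ∀ t : ℝ, t₁ ≤ t → S t '' B₀ ⊆ B)
    -- (ii) asymptotic compactness
    (hac : ∀ (u : ℕ → H) (tn : ℕ → ℝ), Bornology.IsBounded (Set.range u) →
      Tendsto tn atTop atTop →
      ∃ φ : ℕ → ℕ, StrictMono φ ∧
        ∃ x : H, Tendsto (fun n => S (tn (φ n)) (u (φ n))) atTop (𝓝 x)) :
    ∃ A : Set H, A.Nonempty ∧ IsCompact A ∧
      (∀ t : ℝ, 0 ≤ t → S t '' A = A) ∧
      (∀ B₀ : Set H, Bornology.IsBounded B₀ → ∀ ε : ℝ, 0 < ε →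
        ∃ T : ℝ, 0 ≤ T ∧ ∀ t : ℝ, T ≤ t → ∀ u ∈ B₀,
          Metric.infDist (S t u) A ≤ ε) := by
  classical
  obtain ⟨B, hBbdd, hBabs⟩ := habs
  -- the omega-limit set of B
  set A : Set H := {x | ∃ (u : ℕ → H) (t : ℕ → ℝ), (∀ n, u n ∈ B) ∧ (∀ n, 0 ≤ t n) ∧
      Tendsto t atTop atTop ∧ Tendsto (fun n => S (t n) (u n)) atTop (𝓝 x)} with hAdef
  have memA : ∀ (x : H) (u : ℕ → H) (t : ℕ → ℝ), (∀ n, u n ∈ B) → (∀ n, 0 ≤ t n) →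
      Tendsto t atTop atTop → Tendsto (fun n => S (t n) (u n)) atTop (𝓝 x) → x ∈ A := by
    intro x u t h1 h2 h3 h4
    exact ⟨u, t, h1, h2, h3, h4⟩
  -- B is nonempty
  obtain ⟨u₀⟩ := (inferInstance : Nonempty H)
  obtain ⟨t₁, ht₁0, ht₁⟩ := hBabs {u₀} Bornology.isBounded_singleton
  have hb : S t₁ u₀ ∈ B := ht₁ t₁ le_rfl ⟨u₀, rfl, rfl⟩
  -- A is nonempty
  have hAne : A.Nonempty := by
    obtain ⟨φ, hφ, x, hx⟩ := hac (fun _ => S t₁ u₀) (fun n => (n : ℝ))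
      (hBbdd.subset (by rintro _ ⟨n, rfl⟩; exact hb)) tendsto_natCast_atTop_atTop
    refine ⟨x, memA x (fun _ => S t₁ u₀) (fun n => ((φ n : ℕ) : ℝ)) (fun _ => hb)
      (fun n => Nat.cast_nonneg _) ?_ hx⟩
    exact tendsto_natCast_atTop_atTop.comp hφ.tendsto_atTop
  -- A is sequentially compact, hence compact
  have hseq : IsSeqCompact A := by
    intro x hx
    have key : ∀ n : ℕ, ∃ p : H × ℝ, p.1 ∈ B ∧ (n : ℝ) ≤ p.2 ∧ 0 ≤ p.2 ∧
        dist (S p.2 p.1) (x n) < 1 / (n + 1) := by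
      intro n
      obtain ⟨u, t, huB, ht0, htt, hconv⟩ := hx n
      have h1 : ∀ᶠ m in atTop, (n : ℝ) ≤ t m := htt.eventually_ge_atTop _
      have h2 : ∀ᶠ m in atTop, dist (S (t m) (u m)) (x n) < 1 / (n + 1) := by
        have := Metric.tendsto_atTop.mp hconv (1 / (n + 1)) (by positivity)
        obtain ⟨N, hN⟩ := this
        exact eventually_atTop.mpr ⟨N, fun m hm => hN m hm⟩
      obtain ⟨m, hm1, hm2⟩ := (h1.and h2).exists
      exact ⟨(u m, t m), huB m, hm1, ht0 m, hm2⟩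
    choose p hpB hps hps0 hpd using key
    set v : ℕ → H := fun n => (p n).1
    set s : ℕ → ℝ := fun n => (p n).2
    have hs : Tendsto s atTop atTop :=
      tendsto_atTop_mono hps tendsto_natCast_atTop_atTop
    obtain ⟨φ, hφ, y, hy⟩ := hac v s
      (hBbdd.subset (by rintro _ ⟨n, rfl⟩; exact hpB n)) hs
    refine ⟨y, memA y (fun n => v (φ n)) (fun n => s (φ n)) (fun n => hpB _)
      (fun n => hps0 _) (hs.comp hφ.tendsto_atTop) hy, φ, hφ, ?_⟩
    -- x ∘ φ → y
    have hd : Tendsto (fun n => dist (S (s (φ n)) (v (φ n))) (x (φ n))) atTop (𝓝 0) := by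
      have h0 : Tendsto (fun n : ℕ => 1 / ((φ n : ℝ) + 1)) atTop (𝓝 0) := by
        have hfa : Tendsto (fun n : ℕ => ((φ n : ℝ) + 1)) atTop atTop :=
          tendsto_atTop_add_const_right _ _ (tendsto_natCast_atTop_atTop.comp hφ.tendsto_atTop)
        simpa [one_div, Function.comp_def] using tendsto_inv_atTop_zero.comp hfa
      refine squeeze_zero (fun n => dist_nonneg) (fun n => (hpd (φ n)).le) h0
    have : Tendsto (fun n => x (φ n)) atTop (𝓝 y) := by
      rw [Metric.tendsto_atTop] at hy ⊢
      intro ε hε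
      obtain ⟨N1, hN1⟩ := hy (ε / 2) (by positivity)
      obtain ⟨N2, hN2⟩ := (Metric.tendsto_atTop.mp (by simpa using hd)) (ε / 2) (by positivity)
      refine ⟨max N1 N2, fun n hn => ?_⟩
      calc dist (x (φ n)) y ≤ dist (x (φ n)) (S (s (φ n)) (v (φ n))) +
            dist (S (s (φ n)) (v (φ n))) y := dist_triangle _ _ _
        _ < ε / 2 + ε / 2 := by
            have h2' := hN2 n (le_trans (le_max_right _ _) hn)
            have h1' := hN1 n (le_trans (le_max_left _ _) hn)
            rw [Real.dist_eq, sub_zero, abs_of_nonneg dist_nonneg] at h2'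
            rw [dist_comm]
            exact add_lt_add h2' h1'
        _ = ε := by ring
    exact this
  have hAcomp : IsCompact A := hseq.isCompact
  -- invariance
  have hinv : ∀ t : ℝ, 0 ≤ t → S t '' A = A := by
    intro t ht
    apply Set.Subset.antisymm
    · rintro _ ⟨x, ⟨u, τ, huB, hτ0, hττ, hconv⟩, rfl⟩
      refine memA _ u (fun n => t + τ n) huB (fun n => add_nonneg ht (hτ0 n))
        (tendsto_atTop_add_const_left _ _ hττ) ?_
      have : Tendsto (fun n => S t (S (τ n) (u n))) atTop (𝓝 (S t x)) :=
        ((hScont t ht).tendsto x).comp hconv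
      refine this.congr fun n => ?_
      exact hSadd (τ n) t (hτ0 n) ht (u n)
    · rintro x ⟨u, τ, huB, hτ0, hττ, hconv⟩
      obtain ⟨N, hN⟩ := eventually_atTop.mp (hττ.eventually_ge_atTop t)
      set u' : ℕ → H := fun n => u (n + N)
      set s' : ℕ → ℝ := fun n => τ (n + N) - t
      have hs'0 : ∀ n, 0 ≤ s' n := fun n => sub_nonneg.mpr (hN (n + N) (Nat.le_add_left _ _))
      have hs' : Tendsto s' atTop atTop := by
        have h1 : Tendsto (fun n : ℕ => τ (n + N)) atTop atTop :=
          hττ.comp (tendsto_add_atTop_nat N)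
        simpa [s', sub_eq_add_neg] using tendsto_atTop_add_const_right atTop (-t) h1
      obtain ⟨φ, hφ, y, hy⟩ := hac u' s'
        (hBbdd.subset (by rintro _ ⟨n, rfl⟩; exact huB _)) hs'
      have hyA : y ∈ A := memA y (fun n => u' (φ n)) (fun n => s' (φ n))
        (fun n => huB _) (fun n => hs'0 _) (hs'.comp hφ.tendsto_atTop) hy
      have heq : S t y = x := by
        have h1 : Tendsto (fun n => S t (S (s' (φ n)) (u' (φ n)))) atTop (𝓝 (S t y)) :=
          ((hScont t ht).tendsto y).comp hy
        have h2 : Tendsto (fun n => S (τ (φ n + N)) (u (φ n + N))) atTop (𝓝 x) := by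
          apply hconv.comp
          apply StrictMono.tendsto_atTop
          exact fun a b hab => by
            simpa using Nat.add_lt_add_right (hφ hab) N
        refine tendsto_nhds_unique (h1.congr fun n => ?_) h2
        rw [hSadd (s' (φ n)) t (hs'0 _) ht]
        congr 1
        simp [s']
      exact ⟨y, hyA, heq⟩
  refine ⟨A, hAne, hAcomp, hinv, ?_⟩
  -- attraction
  intro B₀ hB₀ ε hε
  by_contra hcon
  push_neg at hcon
  obtain ⟨t₂, ht₂0, ht₂⟩ := hBabs B₀ hB₀
  have key : ∀ n : ℕ, ∃ p : ℝ × H, (n : ℝ) + t₂ ≤ p.1 ∧ p.2 ∈ B₀ ∧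
      ε < Metric.infDist (S p.1 p.2) A := by
    intro n
    obtain ⟨t, hth, u, huB₀, hud⟩ := hcon ((n : ℝ) + t₂) (by positivity)
    exact ⟨(t, u), hth, huB₀, hud⟩
  choose p hp1 hp2 hp3 using key
  set v : ℕ → H := fun n => S t₂ ((p n).2)
  set s : ℕ → ℝ := fun n => (p n).1 - t₂
  have hvB : ∀ n, v n ∈ B := fun n => ht₂ t₂ le_rfl ⟨(p n).2, hp2 n, rfl⟩
  have hsn : ∀ n : ℕ, (n : ℝ) ≤ s n := fun n => by
    have := hp1 n; simp only [s]; linarith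
  have hs0 : ∀ n, 0 ≤ s n := fun n => le_trans (Nat.cast_nonneg n) (hsn n)
  have hs : Tendsto s atTop atTop := tendsto_atTop_mono hsn tendsto_natCast_atTop_atTop
  have hkey : ∀ n, S (s n) (v n) = S ((p n).1) ((p n).2) := by
    intro n
    rw [hSadd t₂ (s n) ht₂0 (hs0 n)]
    congr 1
    simp [s]
  obtain ⟨φ, hφ, y, hy⟩ := hac v s
    (hBbdd.subset (by rintro _ ⟨n, rfl⟩; exact hvB n)) hs
  have hyA : y ∈ A := memA y (fun n => v (φ n)) (fun n => s (φ n))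
    (fun n => hvB _) (fun n => hs0 _) (hs.comp hφ.tendsto_atTop) hy
  obtain ⟨N, hN⟩ := Metric.tendsto_atTop.mp hy ε hε
  have hle : Metric.infDist (S (s (φ N)) (v (φ N))) A ≤ dist (S (s (φ N)) (v (φ N))) y :=
    Metric.infDist_le_dist_of_mem hyA
  have := hp3 (φ N)
  rw [← hkey (φ N)] at this
  exact absurd (lt_of_le_of_lt hle (hN N le_rfl)) (not_lt.mpr this.le)
end

section
/- Poincaré inequality for a domain bounded in one direction: let n ≥ 1, fix a coordinate index i ∈ {1, …, n} and a real number d > 0. Let u : ℝⁿ → ℝ be continuously differentiable with compact support contained in the slab {x ∈ ℝⁿ : 0 < xᵢ < d}. Then ∫_{ℝⁿ} u(x)² dx ≤ d² ∫_{ℝⁿ} |∇u(x)|² dx, where |∇u(x)|² = Σ_{j=1}^{n} (∂u/∂x_j)(x)². -/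
open MeasureTheory

/-- Poincaré inequality for a slab, i.e. a domain bounded in only one direction:
if `u` is a `C¹` function with compact support contained in the slab
`{x : 0 < xᵢ < d}`, then `∫ u² ≤ d² ∫ |∇u|²`. -/
theorem poincare_inequality_slab
    (n : ℕ) (hn : 1 ≤ n) (i : Fin n) (d : ℝ) (hd : 0 < d)
    (u : EuclideanSpace ℝ (Fin n) → ℝ)
    (hu : ContDiff ℝ 1 u)
    (hsupp : HasCompactSupport u)
    (hslab : tsupport u ⊆ {x : EuclideanSpace ℝ (Fin n) | 0 < x i ∧ x i < d}) :
    ∫ x : EuclideanSpace ℝ (Fin n), (u x) ^ 2 ≤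
      d ^ 2 * ∫ x : EuclideanSpace ℝ (Fin n),
        ∑ j : Fin n, (fderiv ℝ u x (EuclideanSpace.single j 1)) ^ 2 := by
  have hu' : Differentiable ℝ u := hu.differentiable one_ne_zero
  set v : EuclideanSpace ℝ (Fin n) := EuclideanSpace.single i 1 with hv
  set g : EuclideanSpace ℝ (Fin n) → ℝ := fun x => fderiv ℝ u x v with hgdef
  set w : EuclideanSpace ℝ (Fin n) → ℝ := fun x => x i - d/2 with hwdef
  have hgc : Continuous g :=
    (hu.continuous_fderiv one_ne_zero).clm_apply continuous_const
  have hwc : Continuous w := ((EuclideanSpace.proj (𝕜 := ℝ) i).continuous).sub continuous_const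
  have hwdiff : Differentiable ℝ w :=
    (EuclideanSpace.proj (𝕜 := ℝ) i).differentiable.sub_const _
  have hDw : ∀ x, fderiv ℝ w x v = 1 := by
    intro x
    rw [hwdef, fderiv_sub_const]
    have : fderiv ℝ (fun x : EuclideanSpace ℝ (Fin n) => x i) x
        = EuclideanSpace.proj (𝕜 := ℝ) i := (EuclideanSpace.proj (𝕜 := ℝ) i).fderiv
    rw [this]; simp [v]
  have hDu2 : ∀ x, fderiv ℝ (fun y => u y ^ 2) x v = 2 * u x * g x := by
    intro x
    simp only [pow_two]
    rw [fderiv_fun_mul (hu' x) (hu' x)]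
    simp [hgdef]; ring
  have hgzero : ∀ x, x ∉ tsupport u → g x = 0 := by
    intro x hx
    have : fderiv ℝ u x = 0 := by
      by_contra h
      exact hx (support_fderiv_subset ℝ (Function.mem_support.2 h))
    simp [hgdef, this]
  -- integrability facts
  have hcsq : ∀ (f : EuclideanSpace ℝ (Fin n) → ℝ), Continuous f → HasCompactSupport f →
      Integrable (fun x => f x ^ 2) := by
    intro f hc hs
    exact (hc.pow 2).integrable_of_hasCompactSupport (f := fun x => f x ^ 2)
      (hs.comp_left (g := fun y : ℝ => y ^ 2) (by simp))
  have hgs : HasCompactSupport g :=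
    (hsupp.fderiv ℝ).comp_left (g := fun L : _ →L[ℝ] ℝ => L v) rfl
  have hu2int : Integrable (fun x => u x ^ 2) := hcsq u hu.continuous hsupp
  have hg2int : Integrable (fun x => g x ^ 2) := hcsq g hgc hgs
  have hprods : HasCompactSupport (fun x => w x * (2 * u x * g x)) := by
    apply hsupp.mono'
    intro x hx
    have hx' : w x * (2 * u x * g x) ≠ 0 := hx
    have : u x ≠ 0 := by intro h; apply hx'; simp [h]
    exact subset_tsupport u this
  have hprodc : Continuous (fun x => w x * (2 * u x * g x)) :=
    hwc.mul ((continuous_const.mul hu.continuous).mul hgc)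
  have hprodint : Integrable (fun x => w x * (2 * u x * g x)) :=
    hprodc.integrable_of_hasCompactSupport hprods
  have hwu2s : HasCompactSupport (fun x => w x * u x ^ 2) := by
    apply hsupp.mono'
    intro x hx
    have hx' : w x * u x ^ 2 ≠ 0 := hx
    have : u x ≠ 0 := by intro h; apply hx'; simp [h]
    exact subset_tsupport u this
  have hwu2int : Integrable (fun x => w x * u x ^ 2) :=
    (hwc.mul (hu.continuous.pow 2)).integrable_of_hasCompactSupport hwu2s
  -- integration by parts
  have key : ∫ x, w x * fderiv ℝ (fun y => u y ^ 2) x v =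
      - ∫ x, fderiv ℝ w x v * u x ^ 2 := by
    apply integral_mul_fderiv_eq_neg_fderiv_mul_of_integrable
    · exact hu2int.congr (Filter.Eventually.of_forall fun x => by
        show u x ^ 2 = fderiv ℝ w x v * u x ^ 2
        rw [hDw x]; ring)
    · exact hprodint.congr (Filter.Eventually.of_forall fun x => by
        show w x * (2 * u x * g x) = w x * fderiv ℝ (fun y => u y ^ 2) x v
        rw [hDu2 x])
    · exact hwu2int
    · exact fun x _ => hwdiff x
    · exact fun x _ => (hu'.pow 2) x
  have key2 : ∫ x, (u x) ^ 2 = ∫ x, -(w x * (2 * u x * g x)) := by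
    have h1 : ∫ x, fderiv ℝ w x v * u x ^ 2 = ∫ x, (u x) ^ 2 := by
      congr 1; funext x; rw [hDw x]; ring
    have h2 : ∫ x, w x * fderiv ℝ (fun y => u y ^ 2) x v
        = ∫ x, w x * (2 * u x * g x) := by
      congr 1; funext x; rw [hDu2 x]
    rw [integral_neg, ← h2, key, neg_neg, h1]
  -- pointwise estimate
  have hpt : ∀ x, -(w x * (2 * u x * g x)) ≤ u x ^ 2 / 2 + d ^ 2 / 2 * g x ^ 2 := by
    intro x
    by_cases hx : x ∈ tsupport u
    · obtain ⟨h0, h1⟩ := hslab hx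
      have hw1 : w x = x i - d/2 := rfl
      rcases le_or_gt 0 (u x * g x) with hug | hug
      · nlinarith [sq_nonneg (u x + d * g x), sq_nonneg (u x - d * g x),
          mul_nonneg h0.le hug]
      · nlinarith [sq_nonneg (u x + d * g x), sq_nonneg (u x - d * g x),
          mul_nonneg (sub_nonneg.2 h1.le) (neg_nonneg.2 hug.le)]
    · have h0 : u x = 0 := image_eq_zero_of_notMem_tsupport hx
      have h1 : g x = 0 := hgzero x hx
      simp [h0, h1]
  -- combine
  have step1 : ∫ x, (u x) ^ 2 ≤ ∫ x, (u x ^ 2 / 2 + d ^ 2 / 2 * g x ^ 2) := by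
    rw [key2]
    exact integral_mono (hprodint.neg) ((hu2int.div_const 2).add (hg2int.const_mul _)) hpt
  have step2 : ∫ x, (u x ^ 2 / 2 + d ^ 2 / 2 * g x ^ 2)
      = (∫ x, (u x) ^ 2) / 2 + d ^ 2 / 2 * ∫ x, g x ^ 2 := by
    rw [integral_add (hu2int.div_const 2) ((hg2int.const_mul _))]
    rw [integral_div, integral_const_mul]
  have hmain : ∫ x, (u x) ^ 2 ≤ d ^ 2 * ∫ x, g x ^ 2 := by
    rw [step2] at step1; linarith
  -- final comparison with the sum
  have hsumint : Integrable (fun x => ∑ j : Fin n,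
      (fderiv ℝ u x (EuclideanSpace.single j 1)) ^ 2) := by
    apply integrable_finset_sum
    intro j _
    exact hcsq _ ((hu.continuous_fderiv one_ne_zero).clm_apply continuous_const)
      ((hsupp.fderiv ℝ).comp_left (g := fun L : _ →L[ℝ] ℝ => L (EuclideanSpace.single j 1)) rfl)
  have hfinal : ∫ x, g x ^ 2 ≤ ∫ x, ∑ j : Fin n,
      (fderiv ℝ u x (EuclideanSpace.single j 1)) ^ 2 := by
    apply integral_mono hg2int hsumint
    intro x
    have := Finset.single_le_sum (f := fun j => (fderiv ℝ u x (EuclideanSpace.single j 1)) ^ 2)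
      (fun j _ => sq_nonneg _) (Finset.mem_univ i)
    simpa [hgdef, hv] using this
  calc ∫ x, (u x) ^ 2 ≤ d ^ 2 * ∫ x, g x ^ 2 := hmain
    _ ≤ d ^ 2 * ∫ x, ∑ j : Fin n, (fderiv ℝ u x (EuclideanSpace.single j 1)) ^ 2 :=
        mul_le_mul_of_nonneg_left hfinal (sq_nonneg d)
end

section
/- Accretivity estimate: let λ > 0, set δ = λ/(λ²+4) and σ = λ/(√(λ²+4)·(λ+√(λ²+4))). Let V and H be real inner product spaces and let ι : V → H be a linear map satisfying ‖ι u‖_H ≤ ‖u‖_V for all u ∈ V. Then for all u ∈ V and v ∈ H: δ‖u‖_V² + (λ−δ)‖v‖_H² + (δ²−δλ)⟨ι u, v⟩_H ≥ σ(‖u‖_V² + ‖v‖_H²) + (λ/2)‖v‖_H². -/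
open scoped RealInnerProductSpace

lemma wave_accretivity_key (lam s a b : ℝ) (hlam : 0 < lam) (hs : lam < s)
    (hs2 : s^2 = lam^2 + 4) :
    (lam/(s*(lam+s))) * (a^2 + b^2) + (lam/2) * b^2 ≤
      (lam/s^2) * a^2 + (lam - lam/s^2) * b^2 + ((lam/s^2)^2 - (lam/s^2)*lam) * (a*b) := by
  have hs0 : 0 < s := lt_trans hlam hs
  have hls : 0 < lam + s := by linarith
  have hK : 0 ≤ 2*s^2*a^2 + s^2*(lam^2 + lam*s + 2)*b^2 - 2*(lam^2+3)*(lam+s)*(a*b) := by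
    have h2 : 2*s^2 * (2*s^2*a^2 + s^2*(lam^2 + lam*s + 2)*b^2 - 2*(lam^2+3)*(lam+s)*(a*b))
        = (2*s^2*a - (lam^2+3)*(lam+s)*b)^2
          + 2*(lam^2 + lam*s + 2)*(2*lam^2+7)*b^2 := by
      linear_combination ((2*(lam^2+lam*s+2)*(s^2+lam^2+4) - (lam^2+3)^2) * b^2) * hs2
    have hB : 0 ≤ 2*(lam^2 + lam*s + 2)*(2*lam^2+7)*b^2 := by positivity
    nlinarith [h2, hB, sq_nonneg (2*s^2*a - (lam^2+3)*(lam+s)*b), mul_pos hs0 hs0]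
  have hK' : 0 ≤ 2*lam*s^2*a^2 + s^2*((lam+s)*(s^2-2) - 2*s)*b^2
      - 2*lam*(s^2-1)*(lam+s)*(a*b) := by
    have hexp : 2*lam*s^2*a^2 + s^2*((lam+s)*(s^2-2) - 2*s)*b^2
        - 2*lam*(s^2-1)*(lam+s)*(a*b)
        = lam * (2*s^2*a^2 + s^2*(lam^2 + lam*s + 2)*b^2 - 2*(lam^2+3)*(lam+s)*(a*b)) := by
      linear_combination ((lam+s)*(s^2*b^2 - 2*lam*(a*b))) * hs2
    rw [hexp]
    exact mul_nonneg hlam.le hK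
  rw [← sub_nonneg]
  have hid : ((lam/s^2) * a^2 + (lam - lam/s^2) * b^2 + ((lam/s^2)^2 - (lam/s^2)*lam) * (a*b))
      - ((lam/(s*(lam+s))) * (a^2 + b^2) + (lam/2) * b^2)
      = lam * (2*lam*s^2*a^2 + s^2*((lam+s)*(s^2-2) - 2*s)*b^2
          - 2*lam*(s^2-1)*(lam+s)*(a*b)) / (2 * s^4 * (lam + s)) := by
    field_simp
    ring
  rw [hid]
  positivity

/-- The accretivity estimate for the wave operator: with `δ = λ/(λ²+4)` and
`σ = λ/(√(λ²+4)(λ+√(λ²+4)))`, for any real inner product spaces `V`, `H` and any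
norm-nonincreasing linear map `ι : V → H`,
`δ‖u‖² + (λ−δ)‖v‖² + (δ²−δλ)⟨ιu, v⟩ ≥ σ(‖u‖² + ‖v‖²) + (λ/2)‖v‖²`. -/
theorem wave_operator_accretivity_estimate
    {V H : Type*} [NormedAddCommGroup V] [InnerProductSpace ℝ V]
    [NormedAddCommGroup H] [InnerProductSpace ℝ H]
    (lam : ℝ) (hlam : 0 < lam)
    (ι : V →ₗ[ℝ] H) (hι : ∀ u : V, ‖ι u‖ ≤ ‖u‖)
    (δ σ : ℝ)
    (hδ : δ = lam / (lam ^ 2 + 4))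
    (hσ : σ = lam / (Real.sqrt (lam ^ 2 + 4) * (lam + Real.sqrt (lam ^ 2 + 4))))
    (u : V) (v : H) :
    σ * (‖u‖ ^ 2 + ‖v‖ ^ 2) + (lam / 2) * ‖v‖ ^ 2 ≤
      δ * ‖u‖ ^ 2 + (lam - δ) * ‖v‖ ^ 2 + (δ ^ 2 - δ * lam) * ⟪ι u, v⟫ := by
  set s : ℝ := Real.sqrt (lam ^ 2 + 4) with hsdef
  have h4 : (0:ℝ) ≤ lam ^ 2 + 4 := by positivity
  have hs2 : s ^ 2 = lam ^ 2 + 4 := Real.sq_sqrt h4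
  have hsl : lam < s := by
    have hsnn : 0 ≤ s := Real.sqrt_nonneg _
    nlinarith [hs2]
  have hδ' : δ = lam / s ^ 2 := by rw [hδ, hs2]
  have hσ' : σ = lam / (s * (lam + s)) := hσ
  -- bound on the inner product term
  have hcoef : δ ^ 2 - δ * lam ≤ 0 := by
    have hδpos : 0 < δ := by rw [hδ]; positivity
    have hδle : δ ≤ lam := by
      rw [hδ]
      rw [div_le_iff₀ (by positivity)]
      nlinarith
    nlinarith
  have hinner : ⟪ι u, v⟫ ≤ ‖u‖ * ‖v‖ :=
    le_trans (real_inner_le_norm _ _)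
      (mul_le_mul_of_nonneg_right (hι u) (norm_nonneg v))
  have hterm : (δ ^ 2 - δ * lam) * (‖u‖ * ‖v‖) ≤ (δ ^ 2 - δ * lam) * ⟪ι u, v⟫ :=
    mul_le_mul_of_nonpos_left hinner hcoef
  have hmain := wave_accretivity_key lam s ‖u‖ ‖v‖ hlam hsl hs2
  rw [← hδ', ← hσ'] at hmain
  linarith
end
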